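/- Under the selection model D = 1{V ≤ p(Y*,X)} with V | (Y*,X) ~ Uniform(0,1), V ⊥ W | (Y*,X), and p bounded below by c > 0, the inverse selection probability g(y,x) = 1/p(y,x) satisfies the conditional moment restriction E[D · g(Y*,X) | W, X] = 1 almost surely. -/

import Mathlib

open MeasureTheory ProbabilityTheory

section AuxLemmas

/-- Conditional expectation of the indicator of `s ∩ t` where `t` is `m'`-measurable. -/
lemma condexp_indicator_inter_aux {Ω : Type*} {m' mΩ : MeasurableSpace Ω}
    {μ : @MeasureTheory.Measure Ω mΩ} [IsFiniteMeasure μ] {s t : Set Ω}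
    (hs : MeasurableSet[mΩ] s) (ht : MeasurableSet[m'] t) :
    (μ⟦s ∩ t | m'⟧) =ᵐ[μ] t.indicator (μ⟦s | m'⟧) := by
  have h1 : Set.indicator (s ∩ t) (fun _ => (1 : ℝ))
      = t.indicator (Set.indicator s fun _ => (1 : ℝ)) := by
    rw [Set.indicator_indicator, Set.inter_comm]
  rw [h1]
  exact condExp_indicator ((integrable_const (1 : ℝ)).indicator hs) ht

/-- Enlarging a conditional independence statement: if `V ⊥ W | Z` then also
`(V, Z) ⊥ (W, Z) | Z`. -/
lemma condIndepFun_prod_self {Ω β₁ β₂ E : Type*} [mΩ : MeasurableSpace Ω]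
    [StandardBorelSpace Ω] [Nonempty Ω]
    [mβ₁ : MeasurableSpace β₁] [mβ₂ : MeasurableSpace β₂] [mE : MeasurableSpace E]
    (μ : Measure Ω) [IsFiniteMeasure μ]
    {V : Ω → β₁} {W : Ω → β₂} {Z : Ω → E}
    (hV : Measurable V) (hW : Measurable W) (hZ : Measurable Z)
    (hci : CondIndepFun (MeasurableSpace.comap Z mE) hZ.comap_le V W μ) :
    CondIndepFun (MeasurableSpace.comap Z mE) hZ.comap_le
      (fun ω => (V ω, Z ω)) (fun ω => (W ω, Z ω)) μ := by
  classical
  have hprod := (condIndepFun_iff_condExp_inter_preimage_eq_mul hV hW).mp hci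
  let p1 : Set (Set Ω) :=
    {S | ∃ A B, MeasurableSet A ∧ MeasurableSet B ∧ S = V ⁻¹' A ∩ Z ⁻¹' B}
  let p2 : Set (Set Ω) :=
    {S | ∃ A B, MeasurableSet A ∧ MeasurableSet B ∧ S = W ⁻¹' A ∩ Z ⁻¹' B}
  have hmeas1 : ∀ s ∈ p1, MeasurableSet s := by
    rintro s ⟨A, B, hA, hB, rfl⟩; exact (hV hA).inter (hZ hB)
  have hmeas2 : ∀ s ∈ p2, MeasurableSet s := by
    rintro s ⟨A, B, hA, hB, rfl⟩; exact (hW hA).inter (hZ hB)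
  have hpi1 : IsPiSystem p1 := by
    rintro s ⟨A, B, hA, hB, rfl⟩ s' ⟨A', B', hA', hB', rfl⟩ _
    exact ⟨A ∩ A', B ∩ B', hA.inter hA', hB.inter hB', by
      ext ω; simp only [Set.mem_inter_iff, Set.mem_preimage, Set.mem_setOf_eq]; tauto⟩
  have hpi2 : IsPiSystem p2 := by
    rintro s ⟨A, B, hA, hB, rfl⟩ s' ⟨A', B', hA', hB', rfl⟩ _
    exact ⟨A ∩ A', B ∩ B', hA.inter hA', hB.inter hB', by
      ext ω; simp only [Set.mem_inter_iff, Set.mem_preimage, Set.mem_setOf_eq]; tauto⟩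
  have hsupV : MeasurableSpace.comap (fun ω => (V ω, Z ω)) inferInstance
      = mβ₁.comap V ⊔ mE.comap Z := by
    rw [show (inferInstance : MeasurableSpace (β₁ × E))
        = mβ₁.comap Prod.fst ⊔ mE.comap Prod.snd from rfl,
      MeasurableSpace.comap_sup, MeasurableSpace.comap_comp, MeasurableSpace.comap_comp]
    rfl
  have hsupW : MeasurableSpace.comap (fun ω => (W ω, Z ω)) inferInstance
      = mβ₂.comap W ⊔ mE.comap Z := by
    rw [show (inferInstance : MeasurableSpace (β₂ × E))
        = mβ₂.comap Prod.fst ⊔ mE.comap Prod.snd from rfl,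
      MeasurableSpace.comap_sup, MeasurableSpace.comap_comp, MeasurableSpace.comap_comp]
    rfl
  have hgen1 : MeasurableSpace.comap (fun ω => (V ω, Z ω)) inferInstance
      = MeasurableSpace.generateFrom p1 := by
    rw [hsupV]
    refine le_antisymm (sup_le ?_ ?_) (MeasurableSpace.generateFrom_le ?_)
    · rintro s ⟨A, hA, rfl⟩
      exact MeasurableSpace.measurableSet_generateFrom
        ⟨A, Set.univ, hA, MeasurableSet.univ, by simp⟩
    · rintro s ⟨B, hB, rfl⟩
      exact MeasurableSpace.measurableSet_generateFrom
        ⟨Set.univ, B, MeasurableSet.univ, hB, by simp⟩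
    · rintro s ⟨A, B, hA, hB, rfl⟩
      exact MeasurableSet.inter
        ((le_sup_left : mβ₁.comap V ≤ mβ₁.comap V ⊔ mE.comap Z) _ ⟨A, hA, rfl⟩)
        ((le_sup_right : mE.comap Z ≤ mβ₁.comap V ⊔ mE.comap Z) _ ⟨B, hB, rfl⟩)
  have hgen2 : MeasurableSpace.comap (fun ω => (W ω, Z ω)) inferInstance
      = MeasurableSpace.generateFrom p2 := by
    rw [hsupW]
    refine le_antisymm (sup_le ?_ ?_) (MeasurableSpace.generateFrom_le ?_)
    · rintro s ⟨A, hA, rfl⟩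
      exact MeasurableSpace.measurableSet_generateFrom
        ⟨A, Set.univ, hA, MeasurableSet.univ, by simp⟩
    · rintro s ⟨B, hB, rfl⟩
      exact MeasurableSpace.measurableSet_generateFrom
        ⟨Set.univ, B, MeasurableSet.univ, hB, by simp⟩
    · rintro s ⟨A, B, hA, hB, rfl⟩
      exact MeasurableSet.inter
        ((le_sup_left : mβ₂.comap W ≤ mβ₂.comap W ⊔ mE.comap Z) _ ⟨A, hA, rfl⟩)
        ((le_sup_right : mE.comap Z ≤ mβ₂.comap W ⊔ mE.comap Z) _ ⟨B, hB, rfl⟩)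
  have hsets : CondIndepSets (MeasurableSpace.comap Z mE) hZ.comap_le p1 p2 μ := by
    rw [condIndepSets_iff _ hZ.comap_le p1 p2 hmeas1 hmeas2 μ]
    rintro t1 t2 ⟨A, B, hA, hB, rfl⟩ ⟨A', B', hA', hB', rfl⟩
    have hBm : MeasurableSet[MeasurableSpace.comap Z mE] (Z ⁻¹' B) := ⟨B, hB, rfl⟩
    have hB'm : MeasurableSet[MeasurableSpace.comap Z mE] (Z ⁻¹' B') := ⟨B', hB', rfl⟩
    have e1 : V ⁻¹' A ∩ Z ⁻¹' B ∩ (W ⁻¹' A' ∩ Z ⁻¹' B')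
        = (V ⁻¹' A ∩ W ⁻¹' A') ∩ (Z ⁻¹' B ∩ Z ⁻¹' B') := by
      ext ω; simp only [Set.mem_inter_iff]; tauto
    have h2 := condexp_indicator_inter_aux (m' := MeasurableSpace.comap Z mE) (μ := μ)
      ((hV hA).inter (hW hA')) (hBm.inter hB'm)
    have h3 := condexp_indicator_inter_aux (m' := MeasurableSpace.comap Z mE) (μ := μ)
      (hV hA) hBm
    have h4 := condexp_indicator_inter_aux (m' := MeasurableSpace.comap Z mE) (μ := μ)
      (hW hA') hB'm
    have h5 := hprod A A' hA hA'
    rw [e1]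
    filter_upwards [h2, h3, h4, h5] with ω h2 h3 h4 h5
    simp only [Pi.mul_apply] at *
    rw [h2, h3, h4]
    by_cases hb : ω ∈ Z ⁻¹' B <;> by_cases hb' : ω ∈ Z ⁻¹' B' <;>
      simp [Set.indicator_apply, hb, hb', h5, mul_assoc, mul_comm, mul_left_comm]
  rw [condIndepFun_iff_condIndep, hgen1, hgen2]
  exact CondIndepSets.condIndep' hmeas1 hmeas2 hpi1 hpi2 hsets

/-- The core result with a merged conditioning pair `Z = (Y*, X)`. -/
theorem conditional_moment_restriction_aux {Ω γ δ : Type*} [MeasurableSpace Ω]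
    [StandardBorelSpace Ω] [Nonempty Ω] [MeasurableSpace γ] [MeasurableSpace δ]
    (μ : Measure Ω) [IsProbabilityMeasure μ]
    (V : Ω → ℝ) (Z : Ω → ℝ × γ) (W : Ω → δ)
    (hV : Measurable V) (hZ : Measurable Z) (hW : Measurable W)
    (p : ℝ × γ → ℝ) (hp : Measurable p) (hp1 : ∀ b, p b ≤ 1)
    (c : ℝ) (hc : 0 < c) (hpc : ∀ b, c ≤ p b)
    (hunif : ∀ᵐ b ∂(μ.map Z),
      condDistrib V Z μ b = volume.restrict (Set.Ioo (0 : ℝ) 1))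
    (hci : CondIndepFun (MeasurableSpace.comap Z inferInstance) hZ.comap_le V W μ) :
    μ[(fun ω => (if V ω ≤ p (Z ω) then (1 : ℝ) else 0) * (p (Z ω))⁻¹) |
        MeasurableSpace.comap (fun ω => (W ω, (Z ω).2)) inferInstance]
      =ᵐ[μ] fun _ => (1 : ℝ) := by
  classical
  have hppos : ∀ b, (0 : ℝ) < p b := fun b => lt_of_lt_of_le hc (hpc b)
  have hm' : MeasurableSpace.comap Z inferInstance ≤ _ := hZ.comap_le
  have hmW : MeasurableSpace.comap (fun ω => (W ω, (Z ω).2)) inferInstance ≤ _ :=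
    (hW.prodMk hZ.snd).comap_le
  -- the selection event
  set Dev : Set Ω := (fun ω => (V ω, Z ω)) ⁻¹' {q : ℝ × (ℝ × γ) | q.1 ≤ p q.2} with hDevdef
  have hSmeas : MeasurableSet {q : ℝ × (ℝ × γ) | q.1 ≤ p q.2} :=
    measurableSet_le measurable_fst (hp.comp measurable_snd)
  have hDmeas : MeasurableSet Dev := (hV.prodMk hZ) hSmeas
  -- enlarged conditional independence
  have hDW := condIndepFun_prod_self μ hV hW hZ hci
  -- Step C: conditional expectation of the selection indicator given Z is p ∘ Z
  have hDcond : (μ⟦Dev | MeasurableSpace.comap Z inferInstance⟧) =ᵐ[μ] fun ω => p (Z ω) := by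
    have hS' : MeasurableSet {q : (ℝ × γ) × ℝ | q.2 ≤ p q.1} :=
      measurableSet_le measurable_snd (hp.comp measurable_fst)
    have hfun : Set.indicator Dev (fun _ => (1 : ℝ))
        = fun ω => Set.indicator {q : (ℝ × γ) × ℝ | q.2 ≤ p q.1}
            (fun _ => (1 : ℝ)) (Z ω, V ω) := by
      funext ω
      by_cases h : V ω ≤ p (Z ω) <;>
        simp [Set.indicator_apply, h, hDevdef]
    have hint : Integrable
        (fun ω => Set.indicator {q : (ℝ × γ) × ℝ | q.2 ≤ p q.1}
          (fun _ => (1 : ℝ)) (Z ω, V ω)) μ := by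
      rw [← hfun]
      exact (integrable_const (1 : ℝ)).indicator hDmeas
    have hcE := condExp_prod_ae_eq_integral_condDistrib (μ := μ) hZ hV.aemeasurable
      (f := Set.indicator {q : (ℝ × γ) × ℝ | q.2 ≤ p q.1} (fun _ => (1 : ℝ)))
      (stronglyMeasurable_const.indicator hS') hint
    rw [hfun]
    refine hcE.trans ?_
    have hunif' : ∀ᵐ ω ∂μ, condDistrib V Z μ (Z ω) = volume.restrict (Set.Ioo (0 : ℝ) 1) :=
      ae_of_ae_map hZ.aemeasurable hunif
    filter_upwards [hunif'] with ω hu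
    rw [hu]
    have hf2 : (fun v => Set.indicator {q : (ℝ × γ) × ℝ | q.2 ≤ p q.1}
        (fun _ => (1 : ℝ)) (Z ω, v)) = Set.indicator (Set.Iic (p (Z ω))) (fun _ => (1 : ℝ)) := by
      funext v
      by_cases h : v ≤ p (Z ω) <;> simp [Set.indicator_apply, h]
    rw [hf2, integral_indicator_const _ measurableSet_Iic, measureReal_def,
      Measure.restrict_apply measurableSet_Iic]
    have hvol : volume (Set.Iic (p (Z ω)) ∩ Set.Ioo (0 : ℝ) 1) = ENNReal.ofReal (p (Z ω)) := by
      rcases lt_or_ge (p (Z ω)) 1 with h1 | h1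
      · have he : Set.Iic (p (Z ω)) ∩ Set.Ioo (0 : ℝ) 1 = Set.Ioc 0 (p (Z ω)) := by
          ext v
          simp only [Set.mem_inter_iff, Set.mem_Iic, Set.mem_Ioo, Set.mem_Ioc]
          exact ⟨fun h => ⟨h.2.1, h.1⟩, fun h => ⟨h.2, h.1, lt_of_le_of_lt h.2 h1⟩⟩
        rw [he, Real.volume_Ioc, sub_zero]
      · have hpe : p (Z ω) = 1 := le_antisymm (hp1 _) h1
        have he : Set.Iic (p (Z ω)) ∩ Set.Ioo (0 : ℝ) 1 = Set.Ioo 0 1 := by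
          rw [hpe]
          ext v
          simp only [Set.mem_inter_iff, Set.mem_Iic, Set.mem_Ioo]
          exact ⟨fun h => h.2, fun h => ⟨le_of_lt h.2, h⟩⟩
        rw [he, Real.volume_Ioo, sub_zero, hpe]
    rw [hvol, ENNReal.toReal_ofReal (hppos _).le, smul_eq_mul, mul_one]
  -- measurability and integrability of the target function
  have hfmeas : Measurable (fun ω => (if V ω ≤ p (Z ω) then (1 : ℝ) else 0) * (p (Z ω))⁻¹) := by
    refine Measurable.mul ?_ ((hp.comp hZ).inv)
    exact Measurable.ite (measurableSet_le hV (hp.comp hZ)) measurable_const measurable_const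
  have hf_int : Integrable (fun ω => (if V ω ≤ p (Z ω) then (1 : ℝ) else 0) * (p (Z ω))⁻¹) μ := by
    refine Integrable.mono' (integrable_const (c⁻¹)) hfmeas.aestronglyMeasurable ?_
    refine Filter.Eventually.of_forall fun ω => ?_
    rw [Real.norm_eq_abs, abs_mul]
    have h2 : |(p (Z ω))⁻¹| ≤ c⁻¹ := by
      rw [abs_of_pos (inv_pos.mpr (hppos _))]
      exact inv_anti₀ hc (hpc _)
    have h1 : |(if V ω ≤ p (Z ω) then (1 : ℝ) else 0)| ≤ 1 := by
      split <;> simp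
    calc |(if V ω ≤ p (Z ω) then (1 : ℝ) else 0)| * |(p (Z ω))⁻¹|
        ≤ 1 * c⁻¹ := by
          exact mul_le_mul h1 h2 (abs_nonneg _) zero_le_one
      _ = c⁻¹ := one_mul _
  -- the set-integral characterization
  refine (ae_eq_condExp_of_forall_setIntegral_eq hmW hf_int
    (fun s _ _ => (integrable_const (1 : ℝ)).integrableOn) ?_
    stronglyMeasurable_const.aestronglyMeasurable).symm
  rintro s ⟨t, ht, rfl⟩ -
  set Wev : Set Ω := (fun ω => (W ω, Z ω)) ⁻¹' {q : δ × (ℝ × γ) | (q.1, q.2.2) ∈ t}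
    with hWevdef
  have hsW : (fun ω => (W ω, (Z ω).2)) ⁻¹' t = Wev := rfl
  have hTmeas : MeasurableSet {q : δ × (ℝ × γ) | (q.1, q.2.2) ∈ t} :=
    (measurable_fst.prodMk measurable_snd.snd) ht
  have hsmeas : MeasurableSet ((fun ω => (W ω, (Z ω).2)) ⁻¹' t) := (hW.prodMk hZ.snd) ht
  -- conditional independence applied to the two events
  have hprod := (condIndepFun_iff_condExp_inter_preimage_eq_mul
    (hV.prodMk hZ) (hW.prodMk hZ)).mp hDW _ _ hSmeas hTmeas
  -- splitting the integrand
  have hmul : Set.indicator ((fun ω => (W ω, (Z ω).2)) ⁻¹' t)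
        (fun ω => (if V ω ≤ p (Z ω) then (1 : ℝ) else 0) * (p (Z ω))⁻¹)
      = (fun ω => (p (Z ω))⁻¹) * Set.indicator (Dev ∩ Wev) (fun _ => (1 : ℝ)) := by
    rw [hsW]
    funext ω
    simp only [Pi.mul_apply]
    by_cases h1 : V ω ≤ p (Z ω) <;> by_cases h2 : ω ∈ Wev <;>
      simp [Set.indicator_apply, h1, h2, hDevdef, Set.mem_inter_iff, Set.mem_preimage,
        Set.mem_setOf_eq, mul_comm]
  have hg_sm : StronglyMeasurable[MeasurableSpace.comap Z inferInstance]
      (fun ω => (p (Z ω))⁻¹) := by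
    have hZm : Measurable[MeasurableSpace.comap Z inferInstance] Z :=
      Measurable.of_comap_le le_rfl
    exact ((hp.inv).comp hZm).stronglyMeasurable
  have hind_int : Integrable (Set.indicator (Dev ∩ Wev) (fun _ => (1 : ℝ))) μ :=
    (integrable_const (1 : ℝ)).indicator (hDmeas.inter (hsW ▸ hsmeas))
  have hmul_int : Integrable
      ((fun ω => (p (Z ω))⁻¹) * Set.indicator (Dev ∩ Wev) (fun _ => (1 : ℝ))) μ := by
    rw [← hmul]
    exact hf_int.indicator hsmeas
  have key_ae : μ[Set.indicator ((fun ω => (W ω, (Z ω).2)) ⁻¹' t)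
        (fun ω => (if V ω ≤ p (Z ω) then (1 : ℝ) else 0) * (p (Z ω))⁻¹) | MeasurableSpace.comap Z inferInstance]
      =ᵐ[μ] μ⟦Wev | MeasurableSpace.comap Z inferInstance⟧ := by
    rw [hmul]
    refine (condExp_mul_of_stronglyMeasurable_left hg_sm hmul_int hind_int).trans ?_
    filter_upwards [hprod, hDcond] with ω h2 h3
    simp only [Pi.mul_apply]
    rw [h2, h3]
    rw [← mul_assoc, inv_mul_cancel₀ (ne_of_gt (hppos _)), one_mul]
  -- putting everything together
  calc ∫ x in (fun ω => (W ω, (Z ω).2)) ⁻¹' t, (1 : ℝ) ∂μ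
      = (μ ((fun ω => (W ω, (Z ω).2)) ⁻¹' t)).toReal := by
        rw [setIntegral_const, smul_eq_mul, mul_one, measureReal_def]
    _ = ∫ x, Set.indicator ((fun ω => (W ω, (Z ω).2)) ⁻¹' t) (fun _ => (1 : ℝ)) x ∂μ := by
        rw [integral_indicator_const _ hsmeas, smul_eq_mul, mul_one, measureReal_def]
    _ = ∫ x, (μ⟦Wev | MeasurableSpace.comap Z inferInstance⟧) x ∂μ := by
        rw [hsW]
        exact (integral_condExp hm').symm
    _ = ∫ x, (μ[Set.indicator ((fun ω => (W ω, (Z ω).2)) ⁻¹' t)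
          (fun ω => (if V ω ≤ p (Z ω) then (1 : ℝ) else 0) * (p (Z ω))⁻¹) | MeasurableSpace.comap Z inferInstance]) x ∂μ :=
        (integral_congr_ae key_ae).symm
    _ = ∫ x, Set.indicator ((fun ω => (W ω, (Z ω).2)) ⁻¹' t)
          (fun ω => (if V ω ≤ p (Z ω) then (1 : ℝ) else 0) * (p (Z ω))⁻¹) x ∂μ :=
        integral_condExp hm'
    _ = ∫ x in (fun ω => (W ω, (Z ω).2)) ⁻¹' t,
          (if V x ≤ p (Z x) then (1 : ℝ) else 0) * (p (Z x))⁻¹ ∂μ :=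
        integral_indicator hsmeas

end AuxLemmas

/-- Under the selection model `D = 1{V ≤ p(Y*,X)}` with `V | (Y*,X) ~ U(0,1)`,
`V ⊥ W | (Y*,X)`, and `p ≥ c > 0`, the inverse selection probability `g = 1/p` satisfies
the conditional moment restriction `E[D g(Y*,X) | W, X] = 1` a.s. -/
theorem conditional_moment_restriction {Ω γ δ : Type*} [MeasurableSpace Ω]
    [StandardBorelSpace Ω] [Nonempty Ω] [MeasurableSpace γ] [MeasurableSpace δ]
    (μ : Measure Ω) [IsProbabilityMeasure μ]
    (Ys V : Ω → ℝ) (X : Ω → γ) (W : Ω → δ)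
    (hYs : Measurable Ys) (hV : Measurable V) (hX : Measurable X) (hW : Measurable W)
    (p : ℝ × γ → ℝ) (hp : Measurable p) (hp1 : ∀ b, p b ≤ 1)
    (c : ℝ) (hc : 0 < c) (hpc : ∀ b, c ≤ p b)
    -- V | (Y*,X) ~ Uniform(0,1)
    (hunif : ∀ᵐ b ∂(μ.map fun ω => (Ys ω, X ω)),
      condDistrib V (fun ω => (Ys ω, X ω)) μ b = volume.restrict (Set.Ioo (0 : ℝ) 1))
    -- V ⊥ W | (Y*,X)
    (hci : CondIndepFun (MeasurableSpace.comap (fun ω => (Ys ω, X ω)) inferInstance)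
      ((hYs.prodMk hX).comap_le) V W μ) :
    μ[(fun ω => (if V ω ≤ p (Ys ω, X ω) then (1 : ℝ) else 0) * (p (Ys ω, X ω))⁻¹) |
        MeasurableSpace.comap (fun ω => (W ω, X ω)) inferInstance]
      =ᵐ[μ] fun _ => (1 : ℝ) := by
  exact conditional_moment_restriction_aux μ V (fun ω => (Ys ω, X ω)) W hV
    (hYs.prodMk hX) hW p hp hp1 c hc hpc hunif hci
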